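/- arXiv:1304.4011 — 9 statements merged into one kernel-verified Lean document; each statement's English description precedes it below -/
import Mathlib

section
/- A non-trivial finite-index subgroup is never highly core-free: if Σ < H is a subgroup of finite index with Σ ≠ {1}, then Σ is not highly core-free. -/
/-- The set ΣF = {σf : σ ∈ Σ, f ∈ F}. -/
def cosetProd {H : Type*} [Group H] (A : Subgroup H) (F : Set H) : Set H :=
  {h | ∃ σ ∈ A, ∃ f ∈ F, h = σ * f}

/-- A subgroup `A ≤ H` is highly core-free if for every finite `F ⊆ H`, every `n ≥ 1`
and all nonempty `S₁, …, Sₙ ⊆ H` covering `H \ ΣF`, some `Sₖ` has trivial core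
`⋂_{h ∈ Sₖ} h⁻¹ A h = {1}`. -/
def HighlyCoreFree {H : Type*} [Group H] (A : Subgroup H) : Prop :=
  ∀ F : Set H, F.Finite → ∀ n : ℕ, 1 ≤ n → ∀ S : Fin n → Set H,
    (∀ k, (S k).Nonempty) → (∀ h : H, h ∉ cosetProd A F → ∃ k, h ∈ S k) →
    ∃ k, ∀ x : H, (∀ h ∈ S k, h * x * h⁻¹ ∈ A) → x = 1

/-!
If `A` has finite index, finitely many right cosets `A f` cover `H`, so `H \ AF` is
empty and the single set `S₁ = {1}` covers it. Its core is `A` itself, so high core-freeness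
would force `A = 1`.
-/

section

variable {H : Type*} [Group H]

theorem cosetProd_range_inv_out (A : Subgroup H) :
    cosetProd A (Set.range fun q : H ⧸ A => q.out⁻¹) = Set.univ := by
  refine Set.eq_univ_of_forall fun h => ?_
  obtain ⟨a, ha⟩ := QuotientGroup.mk_out_eq_mul A h⁻¹
  refine ⟨h * ((h⁻¹ : H) : H ⧸ A).out, ?_, _, ⟨(h⁻¹ : H), rfl⟩, by group⟩
  simp [ha]

theorem exists_finite_cosetProd_eq_univ (A : Subgroup H) [A.FiniteIndex] :
    ∃ F : Set H, F.Finite ∧ cosetProd A F = Set.univ := by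
  have : Finite (H ⧸ A) := A.finite_quotient_of_finiteIndex
  exact ⟨_, Set.finite_range _, cosetProd_range_inv_out A⟩

theorem HighlyCoreFree.eq_bot_of_cosetProd_eq_univ {A : Subgroup H} (hA : HighlyCoreFree A)
    {F : Set H} (hF : F.Finite) (hcover : cosetProd A F = Set.univ) : A = ⊥ := by
  obtain ⟨-, hcore⟩ := hA F hF 1 le_rfl (fun _ => {1}) (fun _ => Set.singleton_nonempty 1)
    (fun h hh => absurd (hcover ▸ Set.mem_univ h) hh)
  refine (Subgroup.eq_bot_iff_forall A).2 fun x hx => hcore x ?_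
  rintro h rfl
  simpa using hx

end

/-- A non-trivial finite-index subgroup is never highly core-free. -/
theorem finiteIndex_not_hcf {H : Type*} [Group H] (A : Subgroup H)
    (hne : A ≠ ⊥) (hfi : A.FiniteIndex) : ¬ HighlyCoreFree A := by
  intro hcf
  obtain ⟨F, hF, hcover⟩ := exists_finite_cosetProd_eq_univ A
  exact hne (hcf.eq_bot_of_cosetProd_eq_univ hF hcover)
end

section
/- Let Σ < H be a non-trivial subgroup of an infinite group H. Then Σ is highly core-free if and only if for all n ≥ 1, all x₁,…,xₙ ∈ H \ {1}, and every finite subset F ⊂ H, the set {h ∈ H : h·xᵢ ∉ ΣF for all i, and h·xᵢ·h⁻¹ ∉ Σ for all i} is non-empty. -/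
/-!
Call `⋂_{h ∈ S} h⁻¹ A h` the core of `S`. If the condition fails for `x` and `F`, then the sets
`Sᵢ = {h | h xᵢ h⁻¹ ∈ A}` cover `H \ ΣF'` with `F' = ⋃ᵢ F xᵢ⁻¹`, and `xᵢ` lies in the core of `Sᵢ`,
so no `Sᵢ` has trivial core. Conversely, if every `Sₖ` of a cover of `H \ ΣF` contains some
`xₖ ≠ 1` in its core, apply the condition to `x₁` and the conjugates `x₁ xₖ x₁⁻¹`: the resulting
`h` makes `g = h x₁` a point outside `ΣF` with `g xₖ g⁻¹ ∉ A` for every `k`, so `g` lies in no `Sₖ`.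
-/

section

variable {H : Type*} [Group H]

lemma mem_cosetProd_of_mul_mem (A : Subgroup H) {F G : Set H} {h x : H}
    (hG : ∀ f ∈ F, f * x⁻¹ ∈ G) (hx : h * x ∈ cosetProd A F) : h ∈ cosetProd A G := by
  obtain ⟨σ, hσ, f, hf, hhx⟩ := hx
  exact ⟨σ, hσ, f * x⁻¹, hG f hf, by rw [← mul_assoc, ← hhx]; group⟩

/-- An empty `Sₖ` may be replaced by `{1}`, whose core is `A ≠ ⊥`. -/
lemma HighlyCoreFree.exists_trivial_core {A : Subgroup H}
    (hA : HighlyCoreFree A) (hne : A ≠ ⊥) {F : Set H} (hF : F.Finite) {n : ℕ} (hn : 1 ≤ n)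
    (S : Fin n → Set H) (hS : ∀ h, h ∉ cosetProd A F → ∃ k, h ∈ S k) :
    ∃ k, ∀ x : H, (∀ h ∈ S k, h * x * h⁻¹ ∈ A) → x = 1 := by
  classical
  let T : Fin n → Set H := fun k => if (S k).Nonempty then S k else {1}
  have hT : ∀ k, (T k).Nonempty := fun k => by
    by_cases hk : (S k).Nonempty
    · simpa only [T, if_pos hk] using hk
    · simp only [T, if_neg hk, Set.singleton_nonempty]
  have hcov : ∀ h, h ∉ cosetProd A F → ∃ k, h ∈ T k := fun h hh =>
    (hS h hh).imp fun k hk => by simpa only [T, if_pos (Set.nonempty_of_mem hk)] using hk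
  obtain ⟨k, hk⟩ := hA F hF n hn T hT hcov
  refine ⟨k, ?_⟩
  by_cases hSk : (S k).Nonempty
  · simpa only [T, if_pos hSk] using hk
  · refine absurd ((Subgroup.eq_bot_iff_forall A).2 fun a ha => hk a ?_) hne
    simpa only [T, if_neg hSk, Set.mem_singleton_iff, forall_eq, one_mul, inv_one, mul_one]
      using ha

lemma HighlyCoreFree.exists_translate_avoiding {A : Subgroup H}
    (hA : HighlyCoreFree A) (hne : A ≠ ⊥) {n : ℕ} (hn : 1 ≤ n) (x : Fin n → H)
    (hx : ∀ i, x i ≠ 1) {F : Set H} (hF : F.Finite) :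
    ∃ h : H, (∀ i, h * x i ∉ cosetProd A F) ∧ (∀ i, h * x i * h⁻¹ ∉ A) := by
  by_contra! hcon
  let F' : Set H := ⋃ i, (· * (x i)⁻¹) '' F
  have hF' : F'.Finite := Set.finite_iUnion fun i => hF.image _
  have hcov : ∀ h, h ∉ cosetProd A F' → ∃ i, h ∈ {g | g * x i * g⁻¹ ∈ A} := fun h hh =>
    hcon h fun i hi => hh <| mem_cosetProd_of_mul_mem A
      (fun f hf => Set.mem_iUnion.2 ⟨i, f, hf, rfl⟩) hi
  obtain ⟨k, hk⟩ := hA.exists_trivial_core hne hF' hn _ hcov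
  exact hx k (hk (x k) fun _ hg => hg)

lemma highlyCoreFree_of_exists_translate_avoiding {A : Subgroup H}
    (hcond : ∀ n : ℕ, 1 ≤ n → ∀ x : Fin n → H, (∀ i, x i ≠ 1) → ∀ F : Set H, F.Finite →
      ∃ h : H, (∀ i, h * x i ∉ cosetProd A F) ∧ (∀ i, h * x i * h⁻¹ ∉ A)) :
    HighlyCoreFree A := by
  intro F hF n hn S _ hcov
  by_contra! hcore
  choose x hxcore hx1 using hcore
  let y := x ⟨0, hn⟩
  let z : Fin (n + 1) → H := Fin.cons y fun k => y * x k * y⁻¹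
  have hz : ∀ i, z i ≠ 1 := Fin.cases (hx1 _) fun k hk =>
    hx1 k (by simpa only [z, Fin.cons_succ, conj_eq_one_iff] using hk)
  obtain ⟨h, hout, hconj⟩ := hcond (n + 1) (Nat.le_add_left 1 n) z hz F hF
  obtain ⟨k, hk⟩ := hcov (h * y) (hout 0)
  apply hconj k.succ
  have hg : h * y * x k * (h * y)⁻¹ ∈ A := hxcore k _ hk
  convert hg using 1
  simp only [z, Fin.cons_succ]
  group

end

theorem hcf_iff_condition_general {H : Type*} [Group H] (A : Subgroup H)
    (hne : A ≠ ⊥) :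
    HighlyCoreFree A ↔
      ∀ n : ℕ, 1 ≤ n → ∀ x : Fin n → H, (∀ i, x i ≠ 1) → ∀ F : Set H, F.Finite →
        ∃ h : H, (∀ i, h * x i ∉ cosetProd A F) ∧ (∀ i, h * x i * h⁻¹ ∉ A) :=
  ⟨fun hA _ hn x hx _ hF => hA.exists_translate_avoiding hne hn x hx hF,
    highlyCoreFree_of_exists_translate_avoiding⟩

/-- Characterisation (1 ⟺ 2) of highly core-free for a non-trivial subgroup of an
infinite group. -/
theorem hcf_iff_condition {H : Type*} [Group H] [Infinite H] (A : Subgroup H)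
    (hne : A ≠ ⊥) :
    HighlyCoreFree A ↔
      ∀ n : ℕ, 1 ≤ n → ∀ x : Fin n → H, (∀ i, x i ≠ 1) → ∀ F : Set H, F.Finite →
        ∃ h : H, (∀ i, h * x i ∉ cosetProd A F) ∧ (∀ i, h * x i * h⁻¹ ∉ A) :=
  hcf_iff_condition_general A hne
end

section
/- Let Σ < H be a non-trivial subgroup of an infinite group H. If for all k ≥ 2, all tuples (x₁,…,x_k) of pairwise distinct elements of H, and every finite subset F ⊂ H the set {h ∈ H : h·xᵢ ∉ ΣF for all i and h·xᵢ·x_j⁻¹·h⁻¹ ∉ Σ for all i ≠ j} is non-empty, then for all n ≥ 1, all x₁,…,xₙ ∈ H \ {1}, and every finite F ⊂ H, the set {h ∈ H : h·xᵢ ∉ ΣF for all i, and h·xᵢ·h⁻¹ ∉ Σ for all i} is non-empty. -/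
theorem Finset.exists_forall_of_forall_injective {α β : Type*} {P : β → α → Prop}
    {Q : β → α → α → Prop}
    (h : ∀ k : ℕ, 2 ≤ k → ∀ x : Fin k → α, Function.Injective x →
      ∃ b, (∀ i, P b (x i)) ∧ ∀ i j, i ≠ j → Q b (x i) (x j))
    (s : Finset α) (hs : 2 ≤ s.card) :
    ∃ b, (∀ a ∈ s, P b a) ∧ ∀ a ∈ s, ∀ a' ∈ s, a ≠ a' → Q b a a' := by
  let e := s.equivFin
  obtain ⟨b, hP, hQ⟩ := h s.card hs (fun i => e.symm i)
    (Subtype.val_injective.comp e.symm.injective)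
  refine ⟨b, fun a ha => by simpa using hP (e ⟨a, ha⟩), fun a ha a' ha' hne => ?_⟩
  have hne' : e ⟨a, ha⟩ ≠ e ⟨a', ha'⟩ := fun heq => hne (congrArg Subtype.val (e.injective heq))
  simpa using hQ _ _ hne'

theorem condition3_implies_condition2_general {H : Type*} [Group H] (A : Subgroup H)
    (h3 : ∀ k : ℕ, 2 ≤ k → ∀ x : Fin k → H, Function.Injective x →
      ∀ F : Set H, F.Finite →
        ∃ h : H, (∀ i, h * x i ∉ cosetProd A F) ∧
          (∀ i j, i ≠ j → h * (x i * (x j)⁻¹) * h⁻¹ ∉ A)) :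
    ∀ n : ℕ, 1 ≤ n → ∀ x : Fin n → H, (∀ i, x i ≠ 1) → ∀ F : Set H, F.Finite →
      ∃ h : H, (∀ i, h * x i ∉ cosetProd A F) ∧ (∀ i, h * x i * h⁻¹ ∉ A) := by
  classical
  intro n hn x hx F hF
  -- Pairing each `x i` with `1` turns `h xᵢ xⱼ⁻¹ h⁻¹ ∉ Σ` into `h xᵢ h⁻¹ ∉ Σ`.
  let s : Finset H := insert 1 (Finset.univ.image x)
  have hxs : ∀ i, x i ∈ s := fun i => Finset.mem_insert_of_mem (by simp)
  have hcard : 2 ≤ s.card := Finset.one_lt_card.mpr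
    ⟨x ⟨0, hn⟩, hxs _, 1, Finset.mem_insert_self _ _, hx _⟩
  obtain ⟨h, hF', hconj⟩ := Finset.exists_forall_of_forall_injective
    (P := fun h a => h * a ∉ cosetProd A F) (Q := fun h a b => h * (a * b⁻¹) * h⁻¹ ∉ A)
    (fun k hk y hy => h3 k hk y hy F hF) s hcard
  refine ⟨h, fun i => hF' _ (hxs i), fun i => ?_⟩
  simpa using hconj _ (hxs i) 1 (Finset.mem_insert_self _ _) (hx i)

/-- Implication (3 ⟹ 2) in the characterisation lemma. -/
theorem condition3_implies_condition2 {H : Type*} [Group H] [Infinite H] (A : Subgroup H)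
    (hne : A ≠ ⊥)
    (h3 : ∀ k : ℕ, 2 ≤ k → ∀ x : Fin k → H, Function.Injective x →
      ∀ F : Set H, F.Finite →
        ∃ h : H, (∀ i, h * x i ∉ cosetProd A F) ∧
          (∀ i j, i ≠ j → h * (x i * (x j)⁻¹) * h⁻¹ ∉ A)) :
    ∀ n : ℕ, 1 ≤ n → ∀ x : Fin n → H, (∀ i, x i ≠ 1) → ∀ F : Set H, F.Finite →
      ∃ h : H, (∀ i, h * x i ∉ cosetProd A F) ∧ (∀ i, h * x i * h⁻¹ ∉ A) :=
  condition3_implies_condition2_general A h3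
end

section
/- Let Σ < H be a non-trivial subgroup of an infinite group H. Then Σ is highly core-free if and only if the left multiplication action of H on the coset space H/Σ is highly faithful. -/
/-- An action is highly faithful if for every finite `F ⊆ X` and nonempty sets
`S₁,…,Sₙ` covering `X \ F`, some `Sₖ` is a faithfulness witness. -/
def HighlyFaithful {H X : Type*} [Group H] [MulAction H X] : Prop :=
  ∀ F : Set X, F.Finite → ∀ n : ℕ, 1 ≤ n → ∀ S : Fin n → Set X,
    (∀ k, (S k).Nonempty) → (∀ x : X, x ∉ F → ∃ k, x ∈ S k) →
    ∃ k, ∀ h : H, (∀ x ∈ S k, h • x = x) → h = 1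

def HighlyWitnessed {X : Type*} (P : Set X → Prop) : Prop :=
  ∀ F : Set X, F.Finite → ∀ n : ℕ, 1 ≤ n → ∀ S : Fin n → Set X,
    (∀ k, (S k).Nonempty) → (∀ x : X, x ∉ F → ∃ k, x ∈ S k) → ∃ k, P (S k)

theorem highlyWitnessed_iff_of_surjective {Y X : Type*} {φ : Y → X}
    (hφ : Function.Surjective φ) (P : Set X → Prop) :
    HighlyWitnessed P ↔ ∀ F : Set Y, F.Finite → ∀ n : ℕ, 1 ≤ n → ∀ S : Fin n → Set Y,
      (∀ k, (S k).Nonempty) → (∀ y : Y, y ∉ φ ⁻¹' (φ '' F) → ∃ k, y ∈ S k) →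
      ∃ k, P (φ '' S k) := by
  constructor
  · intro hP F hF n hn S hS hcov
    refine hP (φ '' F) (hF.image φ) n hn (fun k => φ '' S k) (fun k => (hS k).image φ) ?_
    intro x hx
    obtain ⟨y, rfl⟩ := hφ x
    obtain ⟨k, hk⟩ := hcov y hx
    exact ⟨k, y, hk, rfl⟩
  · intro hP F hF n hn S hS hcov
    obtain ⟨σ, hσ⟩ := hφ.hasRightInverse
    have hF' : φ '' (σ '' F) = F := by simp only [Set.image_image, hσ _, Set.image_id']
    obtain ⟨k, hk⟩ := hP (σ '' F) (hF.image σ) n hn (fun k => φ ⁻¹' S k)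
      (fun k => (hS k).preimage hφ) (fun y hy => hcov (φ y) (by rwa [hF'] at hy))
    exact ⟨k, by rwa [Set.image_preimage_eq _ hφ] at hk⟩

section InvCoset

variable {H : Type*} [Group H] (A : Subgroup H)

theorem cosetProd_eq_preimage_image (F : Set H) :
    cosetProd A F = (fun h : H => (↑h⁻¹ : H ⧸ A)) ⁻¹' ((fun h : H => (↑h⁻¹ : H ⧸ A)) '' F) := by
  ext h
  simp only [cosetProd, Set.mem_ofPred_eq, Set.mem_preimage, Set.mem_image, QuotientGroup.eq,
    inv_inv]
  constructor
  · rintro ⟨σ, hσ, f, hf, rfl⟩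
    exact ⟨f, hf, by simpa [mul_assoc] using A.inv_mem hσ⟩
  · rintro ⟨f, hf, hfh⟩
    exact ⟨h * f⁻¹, by simpa using A.inv_mem hfh, f, hf, by group⟩

theorem smul_coe_inv_eq_iff (x h : H) :
    x • (↑h⁻¹ : H ⧸ A) = ↑h⁻¹ ↔ h * x * h⁻¹ ∈ A := by
  change ((x * h⁻¹ : H) : H ⧸ A) = _ ↔ _
  rw [QuotientGroup.eq, ← A.inv_mem_iff]
  simp only [mul_inv_rev, inv_inv, mul_assoc]

end InvCoset

theorem hcf_iff_highlyFaithful_general {H : Type*} [Group H] (A : Subgroup H) :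
    HighlyCoreFree A ↔ @HighlyFaithful H (H ⧸ A) _ _ := by
  have hφ : Function.Surjective fun h : H => (↑h⁻¹ : H ⧸ A) := fun c => by
    obtain ⟨g, rfl⟩ := QuotientGroup.mk_surjective c
    exact ⟨g⁻¹, congrArg _ (inv_inv g)⟩
  have hfaithful : @HighlyFaithful H (H ⧸ A) _ _ ↔
      HighlyWitnessed fun s : Set (H ⧸ A) => ∀ x : H, (∀ p ∈ s, x • p = p) → x = 1 := Iff.rfl
  rw [hfaithful, highlyWitnessed_iff_of_surjective hφ]
  simp only [HighlyCoreFree, cosetProd_eq_preimage_image, Set.forall_mem_image,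
    smul_coe_inv_eq_iff]

/-- A non-trivial subgroup of an infinite group is highly core-free iff the left
multiplication action on `H/Σ` is highly faithful. -/
theorem hcf_iff_highlyFaithful {H : Type*} [Group H] [Infinite H] (A : Subgroup H)
    (hne : A ≠ ⊥) :
    HighlyCoreFree A ↔ @HighlyFaithful H (H ⧸ A) _ _ :=
  hcf_iff_highlyFaithful_general A
end

section
/- Let Σ ≤ H be a subgroup satisfying: (i) Σ has infinite index in H; (ii) Σ is icc relative to H, i.e. every non-trivial σ ∈ Σ has infinite H-conjugacy class; (iii) for every non-trivial h ∈ H, the set Σ ∩ Cl_H(h) of elements of Σ conjugate in H to h is finite. Then for all n ≥ 1, all x₁,…,xₙ ∈ H \ {1}, and every finite F ⊂ H, the set {h ∈ H : h·xᵢ ∉ ΣF for all i and h·xᵢ·h⁻¹ ∉ Σ for all i} contains infinitely many left Σ-classes (in particular, Σ is highly core-free). -/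
/-!
If the set in question met only finitely many left `Σ`-classes, `H` would be covered by finitely
many cosets: those classes, the classes `Σ f xᵢ⁻¹` (`f ∈ F`), and, for the `h` with
`h xᵢ h⁻¹ ∈ Σ`, one coset `t C_H(xᵢ)` for each of the finitely many `σ = t xᵢ t⁻¹` in
`Σ ∩ Cl_H(xᵢ)`. Conjugates of `Σ` have infinite index, and so does `C_H(xᵢ)`, because `Cl_H(xᵢ)`
is the class of a non-trivial element of `Σ` and hence infinite. This contradicts Neumann's lemma.
The same covering leaves a point of `H \ ΣF` outside every `{h | h xₖ h⁻¹ ∈ Σ}`, which gives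
high core-freeness.
-/

open scoped Pointwise

theorem Subgroup.index_centralizer_eq_ncard_conjugatesOf {G : Type*} [Group G] (x : G) :
    (Subgroup.centralizer {x}).index = (conjugatesOf x).ncard := by
  rw [Subgroup.centralizer_eq_comap_stabilizer]
  refine (Subgroup.index_comap_of_surjective _ ConjAct.toConjAct.surjective).trans
    ((MulAction.index_stabilizer (ConjAct G) x).trans ?_)
  congr 1
  ext g
  exact ConjAct.mem_orbit_conjAct.trans isConj_comm

theorem setOf_exists_conj_eq {G : Type*} [Group G] (x : G) :
    {g : G | ∃ t : G, g = t * x * t⁻¹} = conjugatesOf x := by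
  ext g
  simp [conjugatesOf, isConj_iff, eq_comm]

section CosetNegligible

variable {G : Type*} [Group G]

/-- By Neumann's lemma such a set is never all of `G`. -/
def IsCosetNegligible (S : Set G) : Prop :=
  ∃ s : Finset (G × Subgroup G), (∀ p ∈ s, p.2.index = 0) ∧ S ⊆ ⋃ p ∈ s, p.1 • (p.2 : Set G)

theorem not_isCosetNegligible_univ : ¬ IsCosetNegligible (Set.univ : Set G) := by
  rintro ⟨s, hs, hcover⟩
  obtain ⟨p, hp, hfi⟩ :=
    Subgroup.exists_finiteIndex_of_leftCoset_cover (Set.univ_subset_iff.mp hcover)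
  exact hfi.index_ne_zero (hs p hp)

theorem IsCosetNegligible.mono {S T : Set G} (hT : IsCosetNegligible T) (hST : S ⊆ T) :
    IsCosetNegligible S :=
  let ⟨s, hs, hcover⟩ := hT
  ⟨s, hs, hST.trans hcover⟩

theorem IsCosetNegligible.union {S T : Set G} (hS : IsCosetNegligible S)
    (hT : IsCosetNegligible T) : IsCosetNegligible (S ∪ T) := by
  classical
  obtain ⟨s, hs, hScover⟩ := hS
  obtain ⟨t, ht, hTcover⟩ := hT
  refine ⟨s ∪ t, fun p hp => (Finset.mem_union.mp hp).elim (hs p) (ht p), ?_⟩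
  rw [Finset.set_biUnion_union]
  exact Set.union_subset_union hScover hTcover

theorem isCosetNegligible_empty : IsCosetNegligible (∅ : Set G) :=
  ⟨∅, by simp, Set.empty_subset _⟩

theorem Set.Finite.isCosetNegligible_biUnion {ι : Type*} {t : Set ι} (ht : t.Finite)
    {S : ι → Set G} (hS : ∀ i ∈ t, IsCosetNegligible (S i)) :
    IsCosetNegligible (⋃ i ∈ t, S i) := by
  induction t, ht using Set.Finite.induction_on with
  | empty => simpa using isCosetNegligible_empty
  | @insert i t _ _ ih =>
    rw [Set.biUnion_insert]
    exact (hS i (Set.mem_insert i t)).union (ih fun j hj => hS j (Set.mem_insert_of_mem i hj))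

theorem isCosetNegligible_iUnion {ι : Type*} [Finite ι] {S : ι → Set G}
    (hS : ∀ i, IsCosetNegligible (S i)) : IsCosetNegligible (⋃ i, S i) := by
  simpa using Set.finite_univ.isCosetNegligible_biUnion fun i (_ : i ∈ Set.univ) => hS i

theorem isCosetNegligible_leftCoset (g : G) {K : Subgroup G} (hK : K.index = 0) :
    IsCosetNegligible (g • (K : Set G)) :=
  ⟨{(g, K)}, by simpa using hK, by simp⟩

/-- The preimage of `g • K` is the left coset `(g * x⁻¹) • (x K x⁻¹)`. -/
theorem IsCosetNegligible.preimage_mul_right {S : Set G} (hS : IsCosetNegligible S) (x : G) :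
    IsCosetNegligible ((· * x) ⁻¹' S) := by
  classical
  obtain ⟨s, hs, hcover⟩ := hS
  refine ⟨s.image fun p => (p.1 * x⁻¹, p.2.map (MulAut.conj x).toMonoidHom), ?_, ?_⟩
  · simp only [Finset.mem_image]
    rintro _ ⟨p, hp, rfl⟩
    rw [Subgroup.index_map_of_bijective (MulAut.conj x).bijective]
    exact hs p hp
  · intro h hh
    obtain ⟨p, hp, hhp⟩ := Set.mem_iUnion₂.mp (hcover hh)
    refine Set.mem_iUnion₂.mpr ⟨_, Finset.mem_image_of_mem _ hp, ?_⟩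
    rw [mem_leftCoset_iff] at hhp ⊢
    rw [SetLike.mem_coe, Subgroup.mem_map_equiv, MulAut.conj_symm_apply]
    convert hhp using 1
    simp only [SetLike.mem_coe]
    group

theorem isCosetNegligible_rightCoset {A : Subgroup G} (hA : A.index = 0) (g : G) :
    IsCosetNegligible (MulOpposite.op g • (A : Set G)) := by
  convert (isCosetNegligible_leftCoset 1 hA).preimage_mul_right g⁻¹ using 1
  ext h
  simp [mem_rightCoset_iff]

end CosetNegligible

section RightCosets

variable {H : Type*} [Group H] {A : Subgroup H}

theorem setOf_exists_mem_eq_mul_eq_rightCoset (h : H) :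
    {g : H | ∃ σ ∈ A, g = σ * h} = MulOpposite.op h • (A : Set H) := by
  ext g
  rw [mem_rightCoset_iff]
  constructor
  · rintro ⟨σ, hσ, rfl⟩
    simpa using hσ
  · exact fun hg => ⟨g * h⁻¹, hg, by group⟩

theorem isCosetNegligible_cosetProd (hA : A.index = 0) {F : Set H} (hF : F.Finite) :
    IsCosetNegligible (cosetProd A F) := by
  refine (hF.isCosetNegligible_biUnion fun f _ => isCosetNegligible_rightCoset hA f).mono ?_
  rintro _ ⟨σ, hσ, f, hf, rfl⟩
  exact Set.mem_biUnion hf (by simpa [mem_rightCoset_iff] using hσ)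

theorem isCosetNegligible_of_finite_rightCosets (hA : A.index = 0) {S : Set H}
    (hS : ((fun h : H => {g : H | ∃ σ ∈ A, g = σ * h}) '' S).Finite) :
    IsCosetNegligible S := by
  have hcover : S ⊆ ⋃ C ∈ (fun h : H => {g : H | ∃ σ ∈ A, g = σ * h}) '' S, C := fun h hh =>
    Set.mem_iUnion₂_of_mem (Set.mem_image_of_mem _ hh) ⟨1, A.one_mem, (one_mul h).symm⟩
  refine (hS.isCosetNegligible_biUnion ?_).mono hcover
  rintro _ ⟨h, -, rfl⟩
  dsimp only
  rw [setOf_exists_mem_eq_mul_eq_rightCoset]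
  exact isCosetNegligible_rightCoset hA h

end RightCosets

section Conjugation

variable {G : Type*} [Group G]

/-- A nonempty fibre of `h ↦ h x h⁻¹` is a left coset of the centralizer of `x`. -/
theorem isCosetNegligible_setOf_conj_eq {x : G} (hx : (conjugatesOf x).Infinite) (σ : G) :
    IsCosetNegligible {h | h * x * h⁻¹ = σ} := by
  rcases Set.eq_empty_or_nonempty {h | h * x * h⁻¹ = σ} with hempty | ⟨t, ht⟩
  · exact hempty ▸ isCosetNegligible_empty
  · have hC : (Subgroup.centralizer {x}).index = 0 := by
      rw [Subgroup.index_centralizer_eq_ncard_conjugatesOf, hx.ncard]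
    refine (isCosetNegligible_leftCoset t hC).mono fun h hh => ?_
    rw [mem_leftCoset_iff, SetLike.mem_coe, Subgroup.mem_centralizer_singleton_iff]
    have hth : t * x * t⁻¹ = h * x * h⁻¹ := ht.trans hh.symm
    calc t⁻¹ * h * x = t⁻¹ * (h * x * h⁻¹) * h := by group
      _ = t⁻¹ * (t * x * t⁻¹) * h := by rw [hth]
      _ = x * (t⁻¹ * h) := by group

theorem isCosetNegligible_setOf_conj_mem {A : Subgroup G} {x : G}
    (hfin : {σ | σ ∈ A ∧ IsConj x σ}.Finite)
    (hinf : ∀ σ ∈ A, IsConj x σ → (conjugatesOf σ).Infinite) :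
    IsCosetNegligible {h | h * x * h⁻¹ ∈ A} := by
  have hcover : {h | h * x * h⁻¹ ∈ A} ⊆ ⋃ σ ∈ {σ | σ ∈ A ∧ IsConj x σ}, {h | h * x * h⁻¹ = σ} :=
    fun h hh => Set.mem_iUnion₂_of_mem ⟨hh, isConj_iff.mpr ⟨h, rfl⟩⟩ rfl
  refine (hfin.isCosetNegligible_biUnion fun σ ⟨hσA, hxσ⟩ => ?_).mono hcover
  exact isCosetNegligible_setOf_conj_eq (hxσ.conjugatesOf_eq ▸ hinf σ hσA hxσ) σ

end Conjugation

/-- Lemma 1.7: if `A` has infinite index, is icc relative to `H`, and meets each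
non-trivial conjugacy class of `H` in a finite set, then each set `H_{F,x̄}`
contains infinitely many left `A`-classes; in particular `A` is highly core-free. -/
theorem hcf_criterion {H : Type*} [Group H] (A : Subgroup H)
    (hindex : A.index = 0)
    (hicc : ∀ σ : H, σ ∈ A → σ ≠ 1 → Set.Infinite {g : H | ∃ t : H, g = t * σ * t⁻¹})
    (hfin : ∀ h : H, h ≠ 1 → Set.Finite {σ : H | σ ∈ A ∧ ∃ t : H, σ = t * h * t⁻¹}) :
    (∀ n : ℕ, 1 ≤ n → ∀ x : Fin n → H, (∀ i, x i ≠ 1) → ∀ F : Set H, F.Finite →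
      Set.Infinite
        ((fun h : H => {g : H | ∃ σ ∈ A, g = σ * h}) ''
          {h : H | (∀ i, h * x i ∉ cosetProd A F) ∧ (∀ i, h * x i * h⁻¹ ∉ A)}))
    ∧ HighlyCoreFree A := by
  have hconj : ∀ x : H, x ≠ 1 → IsCosetNegligible {h | h * x * h⁻¹ ∈ A} := by
    intro x hx
    refine isCosetNegligible_setOf_conj_mem ?_ fun σ hσA hxσ => ?_
    · simpa only [isConj_iff, eq_comm] using hfin x hx
    · rw [← setOf_exists_conj_eq]
      exact hicc σ hσA fun hσ => hx (isConj_one_right.mp (hσ ▸ hxσ).symm)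
  refine ⟨fun n _ x hx F hF hfinite => not_isCosetNegligible_univ (G := H) ?_, ?_⟩
  · refine ((isCosetNegligible_of_finite_rightCosets hindex hfinite).union
      (isCosetNegligible_iUnion fun i =>
        ((isCosetNegligible_cosetProd hindex hF).preimage_mul_right (x i)).union
          (hconj (x i) (hx i)))).mono fun h _ => ?_
    simp only [Set.mem_union, Set.mem_iUnion, Set.mem_preimage, Set.mem_ofPred_eq]
    by_contra! hout
    obtain ⟨i, hi⟩ := hout.1 fun i => (hout.2 i).1
    exact (hout.2 i).2 hi
  · intro F hF n _ S _ hcover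
    by_contra! hcore
    choose x hxA hx1 using hcore
    obtain ⟨h, hh⟩ : ∃ h, h ∉ cosetProd A F ∪ ⋃ k, {h | h * x k * h⁻¹ ∈ A} := by
      by_contra! hall
      exact not_isCosetNegligible_univ (((isCosetNegligible_cosetProd hindex hF).union
        (isCosetNegligible_iUnion fun k => hconj (x k) (hx1 k))).mono fun h _ => hall h)
    simp only [Set.mem_union, Set.mem_iUnion, Set.mem_ofPred_eq, not_or, not_exists] at hh
    obtain ⟨k, hk⟩ := hcover h hh.1
    exact hh.2 k (hxA k h hk)
end

section
/- If Σ ≤ H is malnormal and h ∈ H \ {1} is such that Cl_H(h) ∩ Σ ≠ ∅, then there exists σ₀ ∈ Σ \ {1} such that Cl_H(h) ∩ Σ equals the Σ-conjugacy class Cl_Σ(σ₀) = {τσ₀τ⁻¹ : τ ∈ Σ}. -/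
/-- A subgroup is malnormal if each conjugate by an element outside it meets it trivially. -/
def Malnormal {H : Type*} [Group H] (A : Subgroup H) : Prop :=
  ∀ g : H, g ∉ A → ∀ x ∈ A, g * x * g⁻¹ ∈ A → x = 1

namespace Malnormal

variable {H : Type*} [Group H] {A : Subgroup H}

theorem conj_mem_iff (hA : Malnormal A) {σ : H} (hσ : σ ∈ A) (hσ1 : σ ≠ 1) {g : H} :
    g * σ * g⁻¹ ∈ A ↔ g ∈ A :=
  ⟨fun hconj => by_contra fun hg => hσ1 (hA g hg σ hσ hconj),
    fun hg => A.mul_mem (A.mul_mem hg hσ) (A.inv_mem hg)⟩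

theorem conjugatesOf_inter_eq (hA : Malnormal A) {σ : H} (hσ : σ ∈ A) (hσ1 : σ ≠ 1) :
    conjugatesOf σ ∩ A = {x : H | ∃ τ ∈ A, x = τ * σ * τ⁻¹} := by
  ext x
  constructor
  · rintro ⟨hconj, hx⟩
    obtain ⟨t, rfl⟩ := isConj_iff.1 hconj
    exact ⟨t, (hA.conj_mem_iff hσ hσ1).1 hx, rfl⟩
  · rintro ⟨τ, hτ, rfl⟩
    exact ⟨isConj_iff.2 ⟨τ, rfl⟩, (hA.conj_mem_iff hσ hσ1).2 hτ⟩

end Malnormal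

/-- If `A` is malnormal and the conjugacy class of `h ≠ 1` meets `A`, then
`Cl_H(h) ∩ A` is a single `A`-conjugacy class. -/
theorem malnormal_conj_class_inter {H : Type*} [Group H] (A : Subgroup H)
    (hmal : Malnormal A) (h : H) (hne : h ≠ 1)
    (hmeets : ∃ g : H, g * h * g⁻¹ ∈ A) :
    ∃ σ₀ : H, σ₀ ∈ A ∧ σ₀ ≠ 1 ∧
      {x : H | (∃ t : H, x = t * h * t⁻¹) ∧ x ∈ A}
        = {x : H | ∃ τ ∈ A, x = τ * σ₀ * τ⁻¹} := by
  obtain ⟨g, hg⟩ := hmeets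
  have hσ1 : g * h * g⁻¹ ≠ 1 := mt conj_eq_one_iff.1 hne
  have hclass : conjugatesOf h = conjugatesOf (g * h * g⁻¹) :=
    (isConj_iff.2 ⟨g, rfl⟩).conjugatesOf_eq
  refine ⟨g * h * g⁻¹, hg, hσ1, ?_⟩
  rw [← hmal.conjugatesOf_inter_eq hg hσ1, ← hclass]
  ext x
  simp only [Set.mem_ofPred_eq, Set.mem_inter_iff, conjugatesOf, isConj_iff, eq_comm,
    SetLike.mem_coe]
end

section
/- Let H be a group, Σ ≤ H, and H ↷ X a highly transitive action on an infinite set X such that the restriction Σ ↷ X has infinitely many orbits. Then Σ is highly core-free with respect to H ↷ X. -/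
/-- The Σ-orbit of a point: {σ • z : σ ∈ A}. -/
def subOrbit {H X : Type*} [Group H] [MulAction H X] (A : Subgroup H) (z : X) : Set X :=
  {y | ∃ σ ∈ A, y = σ • z}

/-- The set ΣF = {σ • f : σ ∈ A, f ∈ F}. -/
def subProd {H X : Type*} [Group H] [MulAction H X] (A : Subgroup H) (F : Set X) : Set X :=
  {y | ∃ σ ∈ A, ∃ f ∈ F, y = σ • f}

/-- `A` is highly core-free with respect to the action `H ↷ X`: for all `k ≥ 2`, all
pairwise distinct `x₁,…,x_k ∈ X` and all finite `F ⊆ X`, some `h ∈ H` sends each `xᵢ`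
outside `ΣF` with the sets `Σ(h•xᵢ)` pairwise disjoint. -/
def HighlyCoreFreeWrt {H X : Type*} [Group H] [MulAction H X] (A : Subgroup H) : Prop :=
  ∀ k : ℕ, 2 ≤ k → ∀ x : Fin k → X, Function.Injective x → ∀ F : Set X, F.Finite →
    ∃ h : H, (∀ i, h • x i ∉ subProd A F) ∧
      ∀ i j, i ≠ j → Disjoint (subOrbit A (h • x i)) (subOrbit A (h • x j))

/-- An action is highly transitive if it is n-transitive for every n. -/
def HighlyTransitive {H X : Type*} [Group H] [MulAction H X] : Prop :=
  ∀ n : ℕ, ∀ x y : Fin n → X, Function.Injective x → Function.Injective y →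
    ∃ g : H, ∀ i, g • x i = y i

/-!
Σ-orbits partition `X`, and only finitely many of them meet the finite set `F`. So there are
`k` points `y₁, …, y_k` lying in pairwise distinct Σ-orbits, none of which meets `F`; these
points are distinct, and high transitivity gives `h` with `h • xᵢ = yᵢ`.
-/

section subOrbit

variable {H X : Type*} [Group H] [MulAction H X] (A : Subgroup H)

lemma subOrbit_eq_of_mem {y z : X} (h : y ∈ subOrbit A z) : subOrbit A y = subOrbit A z := by
  obtain ⟨σ, hσ, rfl⟩ := h
  ext w
  constructor
  · rintro ⟨τ, hτ, rfl⟩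
    exact ⟨τ * σ, A.mul_mem hτ hσ, (mul_smul τ σ z).symm⟩
  · rintro ⟨τ, hτ, rfl⟩
    exact ⟨τ * σ⁻¹, A.mul_mem hτ (A.inv_mem hσ), by rw [mul_smul, inv_smul_smul]⟩

lemma disjoint_subOrbit_of_ne {y z : X} (h : subOrbit A y ≠ subOrbit A z) :
    Disjoint (subOrbit A y) (subOrbit A z) :=
  Set.disjoint_left.2 fun _ hy hz =>
    h ((subOrbit_eq_of_mem A hy).symm.trans (subOrbit_eq_of_mem A hz))

lemma subOrbit_mem_image_of_mem_subProd {y : X} {F : Set X} (h : y ∈ subProd A F) :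
    subOrbit A y ∈ subOrbit A '' F := by
  obtain ⟨σ, hσ, f, hf, rfl⟩ := h
  exact ⟨f, hf, (subOrbit_eq_of_mem A ⟨σ, hσ, rfl⟩).symm⟩

end subOrbit

lemma exists_injective_comp_forall_notMem {α β : Type*} {f : α → β}
    (hf : (Set.range f).Infinite) {T : Set β} (hT : T.Finite) (n : ℕ) :
    ∃ y : Fin n → α, Function.Injective (f ∘ y) ∧ ∀ i, f (y i) ∉ T := by
  set e := (hf.sdiff hT).natEmbedding
  choose y hy using fun m : ℕ => (e m).2.1
  refine ⟨fun i => y i, fun i j hij => ?_, fun i => hy i ▸ (e i).2.2⟩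
  have hij' : (e i : β) = e j := (hy i).symm.trans (hij.trans (hy j))
  exact Fin.ext (e.injective (Subtype.ext hij'))

theorem highlyTransitive_hcfWrt_general {H X : Type*} [Group H] [MulAction H X]
    (A : Subgroup H) (hht : HighlyTransitive (H := H) (X := X))
    (horb : Set.Infinite (Set.range fun z : X => subOrbit A z)) :
    HighlyCoreFreeWrt (X := X) A := by
  intro k _ x hx F hF
  obtain ⟨y, hy_inj, hy_out⟩ :=
    exists_injective_comp_forall_notMem horb (hF.image (subOrbit A)) k
  obtain ⟨g, hg⟩ := hht k x y hx hy_inj.of_comp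
  refine ⟨g, fun i hi => ?_, fun i j hij => ?_⟩
  · rw [hg] at hi
    exact hy_out i (subOrbit_mem_image_of_mem_subProd A hi)
  · rw [hg, hg]
    exact disjoint_subOrbit_of_ne A (hy_inj.ne hij)

/-- If `H ↷ X` is highly transitive and `A ↷ X` has infinitely many orbits, then
`A` is highly core-free w.r.t. `H ↷ X`. -/
theorem highlyTransitive_hcfWrt {H X : Type*} [Group H] [MulAction H X] [Infinite X]
    (A : Subgroup H) (hht : HighlyTransitive (H := H) (X := X))
    (horb : Set.Infinite (Set.range fun z : X => subOrbit A z)) :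
    HighlyCoreFreeWrt (X := X) A :=
  highlyTransitive_hcfWrt_general A hht horb
end

section
/- The stabilizer Σ = Stab(0) of the point 0 in the group H = S_∞ of finitely supported permutations of ℕ is core-free in H but not highly core-free in H. -/
/-- The group `S_∞` of finitely supported permutations of ℕ, as a subgroup of
`Equiv.Perm ℕ`. -/
def finSupportedPerms : Subgroup (Equiv.Perm ℕ) where
  carrier := {σ | Set.Finite {x : ℕ | σ x ≠ x}}
  one_mem' := by simp
  mul_mem' := by
    intro σ τ hσ hτ
    refine Set.Finite.subset (hσ.union hτ) ?_
    intro x hx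
    by_contra hc
    simp only [Set.mem_union, Set.mem_setOf_eq, not_or, ne_eq, not_not] at hc
    exact hx (by simp [Equiv.Perm.mul_apply, hc.2, hc.1])
  inv_mem' := by
    intro σ hσ
    refine Set.Finite.subset (Set.Finite.image σ hσ) ?_
    intro x hx
    refine ⟨σ⁻¹ x, ?_, by simp⟩
    simp only [Set.mem_setOf_eq] at hx ⊢
    intro h
    exact hx (by (conv_lhs => rw [← h]); exact σ.apply_symm_apply x)

/-!
Conjugating the stabilizer of `0` by `h` gives the stabilizer of `h⁻¹ • 0`, so the intersection of
the conjugates over a set `S` is the pointwise fixer of `{h⁻¹ • 0 | h ∈ S}`. Since `S_∞` moves `0`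
to every point, the normal core fixes all of `ℕ` and is trivial. But splitting the points into
`{0, 1}` and `{k | k ≥ 2}` yields two pieces, each fixed pointwise by a nontrivial transposition,
which defeats high core-freeness already for `F = {1}`.
-/

namespace MulAction

variable {G X : Type*} [Group G] [MulAction G X]

theorem conj_mem_stabilizer_iff {a : X} {g h : G} :
    h * g * h⁻¹ ∈ stabilizer G a ↔ g • h⁻¹ • a = h⁻¹ • a := by
  rw [mem_stabilizer_iff, mul_smul, mul_smul, ← eq_inv_smul_iff]

theorem normalCore_stabilizer_eq_bot [FaithfulSMul G X] [IsPretransitive G X] (a : X) :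
    (stabilizer G a).normalCore = ⊥ := by
  refine (Subgroup.eq_bot_iff_forall _).2 fun g hg => eq_of_smul_eq_smul (α := X) fun x => ?_
  obtain ⟨h, rfl⟩ := exists_smul_eq G a x
  simpa using conj_mem_stabilizer_iff.1 (hg h⁻¹)

theorem not_highlyCoreFree_stabilizer (a : X) {n : ℕ} (hn : 1 ≤ n) (P : Fin n → Set X)
    (hcover : ∀ x ≠ a, ∃ k, x ∈ P k) (hreach : ∀ k, ∃ g : G, g • a ∈ P k)
    (hfix : ∀ k, ∃ g : G, g ≠ 1 ∧ ∀ x ∈ P k, g • x = x) :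
    ¬ HighlyCoreFree (stabilizer G a) := by
  intro hcf
  obtain ⟨k, hk⟩ := hcf {1} (Set.finite_singleton 1) n hn (fun k => {h | h⁻¹ • a ∈ P k})
    (fun k => (hreach k).elim fun g hg => ⟨g⁻¹, by simpa using hg⟩)
    (fun h hh => hcover _ fun hfixed => hh
      ⟨h, (inv_smul_eq_iff.1 hfixed).symm, 1, rfl, (mul_one h).symm⟩)
  obtain ⟨g, hg, hgP⟩ := hfix k
  exact hg (hk g fun h hh => conj_mem_stabilizer_iff.2 (hgP _ hh))

end MulAction

theorem Equiv.swap_mem_finSupportedPerms (a b : ℕ) : Equiv.swap a b ∈ finSupportedPerms :=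
  (Set.toFinite {a, b}).subset fun x hx => by
    by_contra hab
    simp only [Set.mem_insert_iff, Set.mem_singleton_iff, not_or] at hab
    exact hx (Equiv.swap_apply_of_ne_of_ne hab.1 hab.2)

namespace finSupportedPerms

def swap (a b : ℕ) : finSupportedPerms := ⟨Equiv.swap a b, Equiv.swap_mem_finSupportedPerms a b⟩

@[simp]
theorem swap_smul (a b x : ℕ) : swap a b • x = Equiv.swap a b x := rfl

theorem swap_ne_one {a b : ℕ} (hab : a ≠ b) : swap a b ≠ 1 := fun h => by
  simpa [hab.symm] using congr_arg (· • a) h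

instance : MulAction.IsPretransitive finSupportedPerms ℕ :=
  ⟨fun a b => ⟨swap a b, Equiv.swap_apply_left a b⟩⟩

end finSupportedPerms

/-- The stabilizer of `0` in `S_∞` is core-free but not highly core-free. -/
theorem stabilizer_corefree_not_hcf :
    (MulAction.stabilizer (↥finSupportedPerms) (0 : ℕ)).normalCore = ⊥ ∧
    ¬ HighlyCoreFree (MulAction.stabilizer (↥finSupportedPerms) (0 : ℕ)) := by
  open finSupportedPerms in
  refine ⟨MulAction.normalCore_stabilizer_eq_bot 0,
    MulAction.not_highlyCoreFree_stabilizer 0 (n := 2) one_le_two ![{0, 1}, Set.Ici 2]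
      (fun x _ => ?_) (fun k => ?_) (fun k => ?_)⟩
  · rcases lt_or_ge x 2 with hx | hx
    · exact ⟨0, show x = 0 ∨ x = 1 by omega⟩
    · exact ⟨1, hx⟩
  · fin_cases k
    · exact ⟨1, by simp⟩
    · exact ⟨swap 0 2, by simp⟩
  · fin_cases k
    · exact ⟨swap 2 3, swap_ne_one (by norm_num), fun x (hx : x = 0 ∨ x = 1) =>
        Equiv.swap_apply_of_ne_of_ne (by omega) (by omega)⟩
    · exact ⟨swap 0 1, swap_ne_one (by norm_num), fun x (hx : 2 ≤ x) =>
        Equiv.swap_apply_of_ne_of_ne (by omega) (by omega)⟩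
end

section
/- Let Σ be a non-trivial subgroup of an infinite group H. Suppose that for all n ≥ 1, all x₁,…,xₙ ∈ H \ {1}, and all finite F ⊂ H, the set {h ∈ H : h·xᵢ ∉ ΣF for all i, and h·xᵢ·h⁻¹ ∉ Σ for all i} is non-empty. Then Σ is highly core-free in H. -/
/-!
If every piece `S k` of a cover of `H \ ΣF` had a nontrivial element `x k` in its core, pick a
nontrivial `x₀` and apply the hypothesis to `x₀` together with the conjugates `x₀ (x k) x₀⁻¹`.
The resulting `h` makes `g = h x₀` avoid `ΣF`, so `g` lies in some `S k`, whence
`g (x k) g⁻¹ ∈ Σ`; but `g (x k) g⁻¹ = h (x₀ (x k) x₀⁻¹) h⁻¹ ∉ Σ`.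
-/

theorem exists_notMem_cosetProd_forall_conj_notMem {H : Type*} [Group H] (A : Subgroup H)
    (h2 : ∀ n : ℕ, 1 ≤ n → ∀ x : Fin n → H, (∀ i, x i ≠ 1) → ∀ F : Set H, F.Finite →
      ∃ h : H, (∀ i, h * x i ∉ cosetProd A F) ∧ (∀ i, h * x i * h⁻¹ ∉ A))
    {x₀ : H} (hx₀ : x₀ ≠ 1) {n : ℕ} (x : Fin n → H) (hx : ∀ i, x i ≠ 1)
    {F : Set H} (hF : F.Finite) :
    ∃ g : H, g ∉ cosetProd A F ∧ ∀ i, g * x i * g⁻¹ ∉ A := by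
  let y : Fin (n + 1) → H := Fin.cons x₀ fun i => x₀ * x i * x₀⁻¹
  have hy : ∀ j, y j ≠ 1 := Fin.cases hx₀ fun i => by simpa [y, conj_eq_one_iff] using hx i
  obtain ⟨h, havoid, hconj⟩ := h2 (n + 1) (Nat.le_add_left 1 n) y hy F hF
  refine ⟨h * x₀, by simpa [y] using havoid 0, fun i hmem => hconj i.succ ?_⟩
  have hrebracket : h * (x₀ * x i * x₀⁻¹) * h⁻¹ = h * x₀ * x i * (h * x₀)⁻¹ := by group
  simpa [y, hrebracket] using hmem

theorem condition2_implies_hcf_general {H : Type*} [Group H] (A : Subgroup H)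
    (h2 : ∀ n : ℕ, 1 ≤ n → ∀ x : Fin n → H, (∀ i, x i ≠ 1) → ∀ F : Set H, F.Finite →
      ∃ h : H, (∀ i, h * x i ∉ cosetProd A F) ∧ (∀ i, h * x i * h⁻¹ ∉ A)) :
    HighlyCoreFree A := by
  intro F hF n hn S _ hcover
  by_contra! hcore
  choose x hxcore hx using hcore
  obtain ⟨g, hgF, hgx⟩ :=
    exists_notMem_cosetProd_forall_conj_notMem A h2 (hx ⟨0, hn⟩) x hx hF
  obtain ⟨k, hgk⟩ := hcover g hgF
  exact hgx k (hxcore k g hgk)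

/-- Implication (2 ⟹ 1): the nonemptiness condition on the sets `H_{F,x̄}`
implies that `A` is highly core-free. -/
theorem condition2_implies_hcf {H : Type*} [Group H] [Infinite H] (A : Subgroup H)
    (hne : A ≠ ⊥)
    (h2 : ∀ n : ℕ, 1 ≤ n → ∀ x : Fin n → H, (∀ i, x i ≠ 1) → ∀ F : Set H, F.Finite →
      ∃ h : H, (∀ i, h * x i ∉ cosetProd A F) ∧ (∀ i, h * x i * h⁻¹ ∉ A)) :
    HighlyCoreFree A :=
  condition2_implies_hcf_general A h2
end
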